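/- (Kleene star construction.) Let Aut = (L, χ, Attr, Q, {q₀}, F, Δ) be a parametric automaton with a single initial state q₀ ∉ F such that no state of F has an outgoing transition in Δ. Let Aut' be the parametric automaton with state set Q ∖ F, single initial state q₀, final states {q₀}, and transitions Δ' = (Δ minus all transitions whose target lies in F) ∪ { q →(t, φ, inv) q₀ : q →(t, φ, inv) q_f ∈ Δ for some q_f ∈ F }. Then (i) Aut' accepts the empty sequence ε with the empty assignment, and (ii) for every n ≥ 1 and nonempty element sequences p₁, …, pₙ such that each pᵢ is accepted by Aut with assignment μᵢ and the assignments μ₁, …, μₙ are pairwise unifiable, Aut' accepts the concatenation p₁·p₂·⋯·pₙ with assignment μ₁ ∪ ⋯ ∪ μₙ. -/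

import Mathlib

/-- A property value: a string constant or a rational number. -/
inductive Val where
  | str : String → Val
  | num : ℚ → Val

def Val.asNum : Val → Option ℚ
  | .num q => some q
  | _ => none

/-- A linear term with rational coefficients over global parameters `χ`
and numeric properties `P`. -/
inductive LinTerm (χ P : Type) where
  | const : ℚ → LinTerm χ P
  | param : ℚ → χ → LinTerm χ P
  | prop  : ℚ → P → LinTerm χ P
  | add   : LinTerm χ P → LinTerm χ P → LinTerm χ P

/-- A partial assignment of rationals to the global parameters. -/
def Assignment (χ : Type) : Type := χ → Option ℚ

def Assignment.empty (χ : Type) : Assignment χ := fun _ => none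

/-- Two assignments are unifiable if they agree on the intersection of their domains. -/
def Unifiable {χ : Type} (μ₁ μ₂ : Assignment χ) : Prop :=
  ∀ x a b, μ₁ x = some a → μ₂ x = some b → a = b

/-- The common extension of two (unifiable) assignments. -/
def Assignment.union {χ : Type} (μ₁ μ₂ : Assignment χ) : Assignment χ :=
  fun x => (μ₁ x).orElse (fun _ => μ₂ x)

/-- Evaluation of a linear term under a parameter assignment and a partial
property valuation; `none` when some needed value is undefined or non-numeric. -/
def LinTerm.eval {χ P : Type} (μ : Assignment χ) (f : P → Option Val) :
    LinTerm χ P → Option ℚ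
  | .const c => some c
  | .param c x => (μ x).map (fun q => c * q)
  | .prop c p => ((f p).bind Val.asNum).map (fun q => c * q)
  | .add t₁ t₂ => do
      let a ← LinTerm.eval μ f t₁
      let b ← LinTerm.eval μ f t₂
      pure (a + b)

/-- Comparison operators for (in)equality atoms. -/
inductive Cmp where
  | lt | le | eq | ge | gt | ne

def Cmp.holds : Cmp → ℚ → ℚ → Prop
  | .lt, a, b => a < b
  | .le, a, b => a ≤ b
  | .eq, a, b => a = b
  | .ge, a, b => a ≥ b
  | .gt, a, b => a > b
  | .ne, a, b => a ≠ b

/-- An atom of a data constraint: a string-equality between a string property and a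
string constant, or an (in)equality between linear terms. -/
inductive Atom (χ P : Type) where
  | strEq : P → String → Atom χ P
  | cmp   : LinTerm χ P → Cmp → LinTerm χ P → Atom χ P

def Atom.sat {χ P : Type} (μ : Assignment χ) (f : P → Option Val) : Atom χ P → Prop
  | .strEq p c => f p = some (.str c)
  | .cmp t₁ op t₂ => ∃ a b, LinTerm.eval μ f t₁ = some a ∧ LinTerm.eval μ f t₂ = some b ∧
      Cmp.holds op a b

/-- A data constraint: a finite conjunction (list) of atoms. `[]` is `true`. -/
abbrev Constraint (χ P : Type) : Type := List (Atom χ P)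

/-- A data constraint holds when all of its atoms hold. -/
def Constraint.sat {χ P : Type} (μ : Assignment χ) (f : P → Option Val)
    (φ : Constraint χ P) : Prop := ∀ a ∈ φ, Atom.sat μ f a

/-- An element: a label (a forward label together with a Boolean flag that is `true`
for inverse labels) and a partial property valuation. -/
def Element (L P : Type) : Type := (L × Bool) × (P → Option Val)

/-- Replace the label of an element by its inverse. -/
def Element.invert {L P : Type} (el : Element L P) : Element L P :=
  ((el.1.1, !el.1.2), el.2)

/-- A parametric automaton over forward labels `L`, global parameters `χ`,
properties `P`, with (finite) state type `Q`: initial states, final states, and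
transitions carrying a forward label, a data constraint and an inverse flag. -/
structure PAutomaton (L χ P Q : Type) where
  init : Set Q
  final : Set Q
  delta : Set (Q × (L × Constraint χ P × Bool) × Q)

/-- `A.AcceptsFrom μ q p`: starting at state `q`, the automaton can read the element
sequence `p` along transitions whose labels, inverse flags, and data constraints are
matched (constraints evaluated under `μ`), ending in a final state. -/
inductive PAutomaton.AcceptsFrom {L χ P Q : Type} (A : PAutomaton L χ P Q)
    (μ : Assignment χ) : Q → List (Element L P) → Prop
  | nil (q : Q) : q ∈ A.final → PAutomaton.AcceptsFrom A μ q []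
  | cons {q q' : Q} {l : L} {φ : Constraint χ P} {inv : Bool}
      {f : P → Option Val} {rest : List (Element L P)} :
      (q, (l, φ, inv), q') ∈ A.delta →
      Constraint.sat μ f φ →
      PAutomaton.AcceptsFrom A μ q' rest →
      PAutomaton.AcceptsFrom A μ q (((l, inv), f) :: rest)

/-- Acceptance of an element sequence with an assignment: some run from an initial
state to a final state reads the sequence. -/
def PAutomaton.Accepts {L χ P Q : Type} (A : PAutomaton L χ P Q)
    (μ : Assignment χ) (p : List (Element L P)) : Prop :=
  ∃ q₀ ∈ A.init, PAutomaton.AcceptsFrom A μ q₀ p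

/-!
Every run of `Aut` on a nonempty word starts in `q₀`, stays in `Q ∖ F` until its last
transition, and that last transition enters `F` (final states have no outgoing transitions).
Redirecting the last transition to `q₀` turns it into a loop of `Aut'` at `q₀`, and loops
compose, so `Aut'` reads the concatenation. Along the way the constraints are evaluated under
the union of the assignments, which extends each of them because they are pairwise unifiable;
satisfaction of a constraint is preserved under extending the assignment.
-/

namespace Assignment

variable {χ : Type}

def Extends (μ μ' : Assignment χ) : Prop :=
  ∀ x a, μ x = some a → μ' x = some a

theorem extends_union_left (μ₁ μ₂ : Assignment χ) : Extends μ₁ (union μ₁ μ₂) := by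
  intro x a ha
  simp [union, ha]

theorem union_eq_some {μ₁ μ₂ : Assignment χ} {x : χ} {b : ℚ} (h : union μ₁ μ₂ x = some b) :
    μ₁ x = some b ∨ μ₂ x = some b := by
  unfold union at h
  cases hx : μ₁ x <;> simp_all

theorem unifiable_foldr_union {ν : Assignment χ} {μs : List (Assignment χ)}
    (h : ∀ μ ∈ μs, Unifiable ν μ) : Unifiable ν (μs.foldr union (empty χ)) := by
  induction μs with
  | nil => intro x a b _ hb; simp [empty] at hb
  | cons μ μs ih =>
    intro x a b ha hb
    rcases union_eq_some hb with hb | hb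
    · exact h μ List.mem_cons_self x a b ha hb
    · exact ih (fun m hm => h m (List.mem_cons_of_mem _ hm)) x a b ha hb

theorem extends_foldr_union {μ : Assignment χ} {μs : List (Assignment χ)} (hmem : μ ∈ μs)
    (hpw : μs.Pairwise Unifiable) : Extends μ (μs.foldr union (empty χ)) := by
  induction μs with
  | nil => cases hmem
  | cons ν μs ih =>
    rw [List.pairwise_cons] at hpw
    rcases List.mem_cons.mp hmem with rfl | hmem
    · exact extends_union_left _ _
    · intro x a ha
      have hrest := ih hmem hpw.2 x a ha
      show (ν x).orElse (fun _ => μs.foldr union (empty χ) x) = some a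
      cases hx : ν x with
      | none => simpa [hx] using hrest
      | some c => simp [unifiable_foldr_union hpw.1 x c a hx hrest]

end Assignment

open Assignment

variable {L χ P Q : Type}

theorem LinTerm.eval_of_extends {μ μ' : Assignment χ} (h : μ.Extends μ') (f : P → Option Val)
    {t : LinTerm χ P} {a : ℚ} (ht : t.eval μ f = some a) : t.eval μ' f = some a := by
  induction t generalizing a with
  | const c => exact ht
  | param c x =>
    simp only [LinTerm.eval, Option.map_eq_some_iff] at ht ⊢
    obtain ⟨q, hq, rfl⟩ := ht
    exact ⟨q, h x q hq, rfl⟩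
  | prop c p => exact ht
  | add t₁ t₂ ih₁ ih₂ =>
    simp only [LinTerm.eval, Option.bind_eq_bind, Option.bind_eq_some_iff, Option.pure_def,
      Option.some_inj] at ht ⊢
    obtain ⟨x, hx, y, hy, rfl⟩ := ht
    exact ⟨x, ih₁ hx, y, ih₂ hy, rfl⟩

theorem Constraint.sat_of_extends {μ μ' : Assignment χ} (h : μ.Extends μ') {f : P → Option Val}
    {φ : Constraint χ P} (hφ : Constraint.sat μ f φ) : Constraint.sat μ' f φ := by
  intro a ha
  cases a with
  | strEq p c => exact hφ _ ha
  | cmp t₁ op t₂ =>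
    obtain ⟨x, y, hx, hy, hop⟩ := hφ _ ha
    exact ⟨x, y, LinTerm.eval_of_extends h f hx, LinTerm.eval_of_extends h f hy, hop⟩

namespace PAutomaton.AcceptsFrom

variable {A : PAutomaton L χ P Q} {μ : Assignment χ}

theorem of_extends {ν : Assignment χ} (h : μ.Extends ν) {q : Q} {w : List (Element L P)}
    (hw : A.AcceptsFrom μ q w) : A.AcceptsFrom ν q w := by
  induction hw with
  | nil q hq => exact .nil q hq
  | cons hδ hφ _ ih => exact .cons hδ (Constraint.sat_of_extends h hφ) ih

theorem mem_final_of_nil {q : Q} (h : A.AcceptsFrom μ q []) : q ∈ A.final := by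
  cases h with
  | nil _ hq => exact hq

theorem eq_nil_of_mem_final (hnoOut : ∀ q ∈ A.final, ∀ lab q', (q, lab, q') ∉ A.delta) {q : Q}
    (hq : q ∈ A.final) {w : List (Element L P)} (hw : A.AcceptsFrom μ q w) : w = [] := by
  cases hw with
  | nil => rfl
  | cons hδ => exact absurd hδ (hnoOut q hq _ _)

theorem flatten {s : Q} (hs : s ∈ A.final) {ws : List (List (Element L P))}
    (hloop : ∀ w ∈ ws, ∀ rest, A.AcceptsFrom μ s rest → A.AcceptsFrom μ s (w ++ rest)) :
    A.AcceptsFrom μ s ws.flatten := by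
  induction ws with
  | nil => exact .nil s hs
  | cons w ws ih =>
    exact hloop w List.mem_cons_self _ (ih fun w' hw' => hloop w' (List.mem_cons_of_mem _ hw'))

theorem star_append {q₀ : Q} (hq₀ : q₀ ∉ A.final) {A' : PAutomaton L χ P {q // q ∉ A.final}}
    (hnoOut : ∀ q ∈ A.final, ∀ lab q', (q, lab, q') ∉ A.delta)
    (hkeep : ∀ (q q' : {q // q ∉ A.final}) lab, (q.1, lab, q'.1) ∈ A.delta →
      (q, lab, q') ∈ A'.delta)
    (hredirect : ∀ (q : {q // q ∉ A.final}) lab qf, qf ∈ A.final → (q.1, lab, qf) ∈ A.delta →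
      (q, lab, ⟨q₀, hq₀⟩) ∈ A'.delta)
    {q : Q} {w : List (Element L P)} (hw : A.AcceptsFrom μ q w) (hne : w ≠ [])
    (hq : q ∉ A.final) {rest : List (Element L P)} (hrest : A'.AcceptsFrom μ ⟨q₀, hq₀⟩ rest) :
    A'.AcceptsFrom μ ⟨q, hq⟩ (w ++ rest) := by
  induction hw with
  | nil => exact absurd rfl hne
  | @cons q q' _ _ _ _ w' hδ hφ hw' ih =>
    by_cases hq' : q' ∈ A.final
    · obtain rfl := hw'.eq_nil_of_mem_final hnoOut hq'
      exact .cons (hredirect ⟨q, hq⟩ _ q' hq' hδ) hφ hrest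
    · have hne' : w' ≠ [] := by
        rintro rfl
        exact hq' hw'.mem_final_of_nil
      exact .cons (hkeep ⟨q, hq⟩ ⟨q', hq'⟩ _ hδ) hφ (ih hne' hq')

end PAutomaton.AcceptsFrom

theorem star_automaton_correct_general {L χ P Q : Type}
    (A : PAutomaton L χ P Q) (q₀ : Q)
    (hinit : A.init = {q₀}) (hq₀ : q₀ ∉ A.final)
    (hnoOut : ∀ q ∈ A.final, ∀ lab q', (q, lab, q') ∉ A.delta)
    (A' : PAutomaton L χ P (Subtype (fun q => q ∉ A.final)))
    (hinit' : A'.init = {⟨q₀, hq₀⟩})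
    (hfinal' : A'.final = {⟨q₀, hq₀⟩})
    (hdelta' : A'.delta = setOf (fun tr =>
        (∃ (q q' : Subtype (fun q => q ∉ A.final)), ∃ lab,
            (q.1, lab, q'.1) ∈ A.delta ∧ tr = (q, lab, q'))
        ∨ (∃ (q : Subtype (fun q => q ∉ A.final)), ∃ lab qf,
            qf ∈ A.final ∧ (q.1, lab, qf) ∈ A.delta ∧
            tr = (q, lab, ⟨q₀, hq₀⟩)))) :
    PAutomaton.Accepts A' (Assignment.empty χ) [] ∧
    ∀ ps : List (List (Element L P) × Assignment χ),
      ps ≠ [] →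
      (∀ x ∈ ps, x.1 ≠ [] ∧ PAutomaton.Accepts A x.2 x.1) →
      (ps.map Prod.snd).Pairwise Unifiable →
      PAutomaton.Accepts A'
        ((ps.map Prod.snd).foldr Assignment.union (Assignment.empty χ))
        (ps.map Prod.fst).flatten := by
  have hq₀init : (⟨q₀, hq₀⟩ : {q // q ∉ A.final}) ∈ A'.init := by simp [hinit']
  have hq₀final : (⟨q₀, hq₀⟩ : {q // q ∉ A.final}) ∈ A'.final := by simp [hfinal']
  have hkeep : ∀ (q q' : {q // q ∉ A.final}) lab, (q.1, lab, q'.1) ∈ A.delta →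
      (q, lab, q') ∈ A'.delta := fun q q' lab hδ => by
    rw [hdelta']
    exact Or.inl ⟨q, q', lab, hδ, rfl⟩
  have hredirect : ∀ (q : {q // q ∉ A.final}) lab qf, qf ∈ A.final → (q.1, lab, qf) ∈ A.delta →
      (q, lab, ⟨q₀, hq₀⟩) ∈ A'.delta := fun q lab qf hqf hδ => by
    rw [hdelta']
    exact Or.inr ⟨q, lab, qf, hqf, hδ, rfl⟩
  refine ⟨⟨_, hq₀init, .nil _ hq₀final⟩, fun ps _ hall hpw => ⟨_, hq₀init, ?_⟩⟩
  refine PAutomaton.AcceptsFrom.flatten hq₀final fun w hw rest hrest => ?_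
  obtain ⟨x, hx, rfl⟩ := List.mem_map.mp hw
  obtain ⟨hne, q, hq, hacc⟩ := hall x hx
  obtain rfl : q = q₀ := by simpa [hinit] using hq
  have hext := extends_foldr_union (List.mem_map_of_mem (f := Prod.snd) hx) hpw
  exact (hacc.of_extends hext).star_append hq₀ hnoOut hkeep hredirect hne hq₀ hrest

/-- Kleene star construction: from `Aut` with single initial state
`q₀ ∉ F` whose final states have no outgoing transitions, build `Aut'` on the state
set `Q ∖ F` (a subtype), with initial and final state `q₀`, keeping the transitions
not targeting `F` and redirecting those targeting `F` into `q₀`. Then (i) `Aut'`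
accepts `ε` with the empty assignment, and (ii) any concatenation of `n ≥ 1`
nonempty sequences, each accepted by `Aut` with pairwise unifiable assignments, is
accepted by `Aut'` with the union of the assignments. -/
theorem star_automaton_correct {L χ P Q : Type} [Fintype Q]
    (A : PAutomaton L χ P Q) (q₀ : Q)
    (hinit : A.init = {q₀}) (hq₀ : q₀ ∉ A.final)
    (hnoOut : ∀ q ∈ A.final, ∀ lab q', (q, lab, q') ∉ A.delta)
    (A' : PAutomaton L χ P (Subtype (fun q => q ∉ A.final)))
    (hinit' : A'.init = {⟨q₀, hq₀⟩})
    (hfinal' : A'.final = {⟨q₀, hq₀⟩})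
    (hdelta' : A'.delta = setOf (fun tr =>
        (∃ (q q' : Subtype (fun q => q ∉ A.final)), ∃ lab,
            (q.1, lab, q'.1) ∈ A.delta ∧ tr = (q, lab, q'))
        ∨ (∃ (q : Subtype (fun q => q ∉ A.final)), ∃ lab qf,
            qf ∈ A.final ∧ (q.1, lab, qf) ∈ A.delta ∧
            tr = (q, lab, ⟨q₀, hq₀⟩)))) :
    PAutomaton.Accepts A' (Assignment.empty χ) [] ∧
    ∀ ps : List (List (Element L P) × Assignment χ),
      ps ≠ [] →
      (∀ x ∈ ps, x.1 ≠ [] ∧ PAutomaton.Accepts A x.2 x.1) →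
      (ps.map Prod.snd).Pairwise Unifiable →
      PAutomaton.Accepts A'
        ((ps.map Prod.snd).foldr Assignment.union (Assignment.empty χ))
        (ps.map Prod.fst).flatten :=
  star_automaton_correct_general A q₀ hinit hq₀ hnoOut A' hinit' hfinal' hdelta'
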